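/- arXiv:2305.16173 — 2 statements merged into one kernel-verified Lean document; each statement's English description precedes it below -/
import Mathlib

section
/- For any complex matrix G and any t ≥ 1, the spectral norm of G is bounded above by ‖G^(t)‖_F^{2^{1-t}}, i.e., σ₁(G) ≤ ‖G^(t)‖_F^{2^{1-t}}. -/
open Matrix Filter Topology

noncomputable def frobNorm {m n : Type*} [Fintype m] [Fintype n] (G : Matrix m n ℂ) : ℝ :=
  Real.sqrt (∑ i, ∑ j, ‖G i j‖ ^ 2)

noncomputable def singVals {m n : Type*} [Fintype m] [Fintype n] [DecidableEq n]
    (G : Matrix m n ℂ) : n → ℝ :=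
  fun i => Real.sqrt ((Matrix.isHermitian_conjTranspose_mul_self G).eigenvalues i)

noncomputable def specNorm {m n : Type*} [Fintype m] [Fintype n] [DecidableEq n]
    (G : Matrix m n ℂ) : ℝ :=
  ⨆ i, singVals G i

/-- `gramIter G t` is the Gram iterate `G⁽ᵗ⁺²⁾` of the sequence `G⁽¹⁾ = G`,
`G⁽ᵗ⁺¹⁾ = (G⁽ᵗ⁾)ᴴ G⁽ᵗ⁾`.  (The first iterate `G⁽¹⁾ = G` is kept separate since it has a
different shape.) -/
noncomputable def gramIter {m n : Type*} [Fintype m] [Fintype n] (G : Matrix m n ℂ) :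
    ℕ → Matrix n n ℂ
  | 0 => Gᴴ * G
  | t + 1 => (gramIter G t)ᴴ * gramIter G t

/-- `gramBound G t` is the bound `‖G⁽ᵗ⁺¹⁾‖_F ^ (2^(1-(t+1)))` of the paper (paper index
`t+1 ≥ 1`). -/
noncomputable def gramBound {m n : Type*} [Fintype m] [Fintype n] (G : Matrix m n ℂ) : ℕ → ℝ
  | 0 => frobNorm G
  | t + 1 => frobNorm (gramIter G t) ^ ((2 : ℝ) ^ (-(t + 1 : ℤ)))

theorem conjPow {n : Type*} [Fintype n] [DecidableEq n] (U D : Matrix n n ℂ)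
    (h : star U * U = 1) (k : ℕ) : (U * D * star U) ^ k = U * D ^ k * star U := by
  induction k with
  | zero => simp [mul_eq_one_comm.mp h]
  | succ k ih =>
    rw [pow_succ, pow_succ, ih]
    simp only [Matrix.mul_assoc]
    rw [← Matrix.mul_assoc (star U) U, h, Matrix.one_mul]

theorem trace_herm_pow {n : Type*} [Fintype n] [DecidableEq n] {H : Matrix n n ℂ}
    (hH : H.IsHermitian) (k : ℕ) :
    Matrix.trace (H ^ k) = ∑ j, ((hH.eigenvalues j : ℂ)) ^ k := by
  conv_lhs => rw [hH.spectral_theorem, Unitary.conjStarAlgAut_apply]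
  rw [conjPow _ _ (by exact_mod_cast (hH.eigenvectorUnitary).2.1) k,
    Matrix.trace_mul_cycle,
    (by exact_mod_cast (hH.eigenvectorUnitary).2.1 :
      star (hH.eigenvectorUnitary : Matrix n n ℂ) * hH.eigenvectorUnitary = 1),
    Matrix.one_mul, Matrix.diagonal_pow, Matrix.trace_diagonal]
  simp [Function.comp]

theorem frob_sq {m n : Type*} [Fintype m] [Fintype n] (M : Matrix m n ℂ) :
    frobNorm M ^ 2 = (Matrix.trace (Mᴴ * M)).re := by
  rw [frobNorm, Real.sq_sqrt (by positivity)]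
  rw [Matrix.trace, Finset.sum_comm]
  simp only [Matrix.diag_apply, Matrix.mul_apply, Matrix.conjTranspose_apply]
  rw [Complex.re_sum]
  congr 1; ext i
  rw [Complex.re_sum]
  congr 1; ext j
  rw [Complex.star_def, Complex.conj_mul']
  simp [← Complex.ofReal_pow]

theorem gramIter_eq {m n : Type*} [Fintype m] [Fintype n] [DecidableEq n]
    (G : Matrix m n ℂ) (t : ℕ) : gramIter G t = (Gᴴ * G) ^ (2 ^ t) := by
  induction t with
  | zero => simp [gramIter]
  | succ t ih =>
    rw [gramIter, ih, ((Matrix.isHermitian_conjTranspose_mul_self G).pow _).eq, ← pow_add]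
    congr 1
    ring


/-- For any complex matrix `G` and any `t ≥ 1`, the spectral norm of `G` is bounded above by
`‖G⁽ᵗ⁾‖_F ^ (2^(1-t))`.  Here `gramBound G t` is this quantity at paper index `t+1`, so the
statement covers every paper index `t ≥ 1`. -/
theorem specNorm_le_gramBound {p q : ℕ} (G : Matrix (Fin p) (Fin q) ℂ) :
    ∀ t : ℕ, specNorm G ≤ gramBound G t := by
  intro t
  have hH := Matrix.isHermitian_conjTranspose_mul_self G
  have hl : ∀ i, 0 ≤ hH.eigenvalues i :=
    Matrix.eigenvalues_conjTranspose_mul_self_nonneg G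
  rcases isEmpty_or_nonempty (Fin q) with hq | hq
  · rw [specNorm, Real.iSup_of_isEmpty]
    cases t with
    | zero => exact Real.sqrt_nonneg _
    | succ t => exact Real.rpow_nonneg (Real.sqrt_nonneg _) _
  · apply ciSup_le
    intro i
    rw [singVals]
    cases t with
    | zero =>
      show Real.sqrt _ ≤ frobNorm G
      have h2 : frobNorm G ^ 2 = ∑ j, hH.eigenvalues j := by
        have h1 := trace_herm_pow hH 1
        rw [pow_one] at h1
        rw [frob_sq, h1, Complex.re_sum]
        simp
      have hle : hH.eigenvalues i ≤ frobNorm G ^ 2 :=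
        h2 ▸ Finset.single_le_sum (fun j _ => hl j) (Finset.mem_univ i)
      calc Real.sqrt (hH.eigenvalues i) ≤ Real.sqrt (frobNorm G ^ 2) := Real.sqrt_le_sqrt hle
        _ = frobNorm G := Real.sqrt_sq (Real.sqrt_nonneg _)
    | succ t =>
      show Real.sqrt _ ≤ frobNorm (gramIter G t) ^ ((2 : ℝ) ^ (-(t + 1 : ℤ)))
      set F := frobNorm (gramIter G t) with hFdef
      have hF : 0 ≤ F := Real.sqrt_nonneg _
      have hF2 : F ^ 2 = ∑ j, hH.eigenvalues j ^ (2 ^ (t + 1)) := by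
        rw [hFdef, frob_sq, gramIter_eq, (hH.pow (2 ^ t)).eq, ← pow_add,
          (show 2 ^ t + 2 ^ t = 2 ^ (t + 1) by ring), trace_herm_pow hH, Complex.re_sum]
        simp [← Complex.ofReal_pow]
      have h1 : hH.eigenvalues i ^ (2 ^ t) ≤ F := by
        have hsq : (hH.eigenvalues i ^ (2 ^ t)) ^ 2 ≤ F ^ 2 := by
          rw [hF2, ← pow_mul, (by ring : 2 ^ t * 2 = 2 ^ (t + 1))]
          exact Finset.single_le_sum (fun j _ => pow_nonneg (hl j) _) (Finset.mem_univ i)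
        calc hH.eigenvalues i ^ 2 ^ t
            = Real.sqrt ((hH.eigenvalues i ^ 2 ^ t) ^ 2) :=
              (Real.sqrt_sq (pow_nonneg (hl i) _)).symm
          _ ≤ Real.sqrt (F ^ 2) := Real.sqrt_le_sqrt hsq
          _ = F := Real.sqrt_sq hF
      have hε : (0 : ℝ) ≤ (2 : ℝ) ^ (-(t + 1 : ℤ)) := by positivity
      have hmono := Real.rpow_le_rpow (pow_nonneg (hl i) _) h1 hε
      have hexp : ((2 ^ t : ℕ) : ℝ) * (2 : ℝ) ^ (-(t + 1 : ℤ)) = 1 / 2 := by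
        push_cast
        rw [← zpow_natCast (2 : ℝ) t, ← zpow_add₀ (two_ne_zero : (2 : ℝ) ≠ 0),
          (by ring : (t : ℤ) + -(t + 1) = -1)]
        norm_num
      calc Real.sqrt (hH.eigenvalues i)
          = hH.eigenvalues i ^ ((1 : ℝ) / 2) := Real.sqrt_eq_rpow _
        _ = (hH.eigenvalues i ^ (2 ^ t : ℕ)) ^ ((2 : ℝ) ^ (-(t + 1 : ℤ))) := by
            rw [← Real.rpow_natCast (hH.eigenvalues i) (2 ^ t), ← Real.rpow_mul (hl i), hexp]
        _ ≤ F ^ ((2 : ℝ) ^ (-(t + 1 : ℤ))) := hmono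
end

section
/- Let G be a complex matrix whose Gram iterates are rescaled at each step: H^(1) = G, H^(t+1) = Ĥ^(t)* Ĥ^(t) with Ĥ^(t) = H^(t)/‖H^(t)‖_F, and cumulated log-scaling r^(t+1) = 2(r^(t) + log ‖H^(t)‖_F), r^(0)=0 appropriately. Then after N iterations, ‖H^(N)‖_F^{2^{-N}} · exp(2^{-N} r^(N)) = s_{2^N}(G), the Schatten 2^N-norm of G. -/
open Matrix Filter Topology

/-- The Schatten `ρ`-norm `s_ρ(G) = (∑ i, σᵢ(G)^ρ)^(1/ρ)`. -/
noncomputable def schattenNorm {m n : Type*} [Fintype m] [Fintype n] [DecidableEq n]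
    (ρ : ℝ) (G : Matrix m n ℂ) : ℝ :=
  (∑ i, singVals G i ^ ρ) ^ (1 / ρ)

/-- `rescIter G N` is the rescaled Gram iterate `H⁽ᴺ⁺²⁾` of the sequence `H⁽¹⁾ = G`,
`H⁽ᵗ⁺¹⁾ = (Ĥ⁽ᵗ⁾)ᴴ Ĥ⁽ᵗ⁾` where `Ĥ⁽ᵗ⁾ = H⁽ᵗ⁾ / ‖H⁽ᵗ⁾‖_F`. -/
noncomputable def rescIter {p q : ℕ} (G : Matrix (Fin p) (Fin q) ℂ) :
    ℕ → Matrix (Fin q) (Fin q) ℂ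
  | 0 => ((frobNorm G)⁻¹ • G)ᴴ * ((frobNorm G)⁻¹ • G)
  | t + 1 =>
      ((frobNorm (rescIter G t))⁻¹ • rescIter G t)ᴴ *
        ((frobNorm (rescIter G t))⁻¹ • rescIter G t)

/-- `rescLog G N` is the cumulated log-scaling `r⁽ᴺ⁺²⁾` of the sequence `r⁽¹⁾ = 0`,
`r⁽ᵗ⁺¹⁾ = 2 (r⁽ᵗ⁾ + log ‖H⁽ᵗ⁾‖_F)`. -/
noncomputable def rescLog {p q : ℕ} (G : Matrix (Fin p) (Fin q) ℂ) : ℕ → ℝ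
  | 0 => 2 * Real.log (frobNorm G)
  | t + 1 => 2 * (rescLog G t + Real.log (frobNorm (rescIter G t)))

section AuxLemmas

variable {m n : Type*} [Fintype m] [Fintype n]

open scoped ComplexOrder

lemma frobNorm_nonneg (G : Matrix m n ℂ) : 0 ≤ frobNorm G := Real.sqrt_nonneg _

lemma frobNorm_sq (G : Matrix m n ℂ) : frobNorm G ^ 2 = ∑ i, ∑ j, ‖G i j‖ ^ 2 :=
  Real.sq_sqrt (by positivity)

lemma frobNorm_eq_zero_iff (G : Matrix m n ℂ) : frobNorm G = 0 ↔ G = 0 := by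
  constructor
  · intro h
    have h2 : ∑ i, ∑ j, ‖G i j‖ ^ 2 = 0 := by
      have := frobNorm_sq G
      rw [h] at this
      simpa using this.symm
    ext i j
    have h3 := (Finset.sum_eq_zero_iff_of_nonneg
      (fun i _ => Finset.sum_nonneg fun j _ => by positivity)).mp h2 i (Finset.mem_univ i)
    have h4 := (Finset.sum_eq_zero_iff_of_nonneg (fun j _ => by positivity)).mp h3 j
      (Finset.mem_univ j)
    simpa using h4
  · rintro rfl
    simp [frobNorm]

lemma frobNorm_smul (c : ℝ) (hc : 0 ≤ c) (G : Matrix m n ℂ) :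
    frobNorm (c • G) = c * frobNorm G := by
  unfold frobNorm
  rw [← Real.sqrt_sq hc, ← Real.sqrt_mul (sq_nonneg c)]
  congr 1
  rw [Finset.mul_sum]
  refine Finset.sum_congr rfl fun i _ => ?_
  rw [Finset.mul_sum]
  refine Finset.sum_congr rfl fun j _ => ?_
  rw [Matrix.smul_apply, norm_smul, mul_pow, Real.norm_eq_abs, sq_abs, Real.sq_sqrt (sq_nonneg c)]

lemma frobNorm_sq_eq_re_trace {k : Type*} [Fintype k] (A : Matrix k k ℂ) :
    frobNorm A ^ 2 = (Matrix.trace (Aᴴ * A)).re := by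
  rw [frobNorm_sq]
  simp only [Matrix.trace, Matrix.diag, Matrix.mul_apply, Matrix.conjTranspose_apply,
    Complex.re_sum]
  rw [Finset.sum_comm]
  refine Finset.sum_congr rfl fun i _ => Finset.sum_congr rfl fun j _ => ?_
  have h5 : star (A j i) * (A j i) = (Complex.normSq (A j i) : ℂ) := by
    rw [mul_comm]; exact Complex.mul_conj _
  rw [h5, Complex.ofReal_re, Complex.normSq_eq_norm_sq]

lemma trace_pow_eq {k : Type*} [Fintype k] [DecidableEq k] {A : Matrix k k ℂ}
    (hA : A.IsHermitian) (r : ℕ) :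
    (A ^ r).trace = ∑ i, ((hA.eigenvalues i : ℂ)) ^ r := by
  set U : Matrix k k ℂ := (hA.eigenvectorUnitary : Matrix k k ℂ) with hU
  set D : Matrix k k ℂ := Matrix.diagonal (RCLike.ofReal ∘ hA.eigenvalues) with hD
  have hU1 : U * star U = 1 := Matrix.mem_unitaryGroup_iff.mp hA.eigenvectorUnitary.2
  have hU2 : star U * U = 1 := Matrix.mem_unitaryGroup_iff'.mp hA.eigenvectorUnitary.2
  have hcancel : ∀ X : Matrix k k ℂ, star U * (U * X) = X := fun X => by
    rw [← mul_assoc, hU2, one_mul]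
  have key : A ^ r = U * D ^ r * star U := by
    induction r with
    | zero => simpa using hU1.symm
    | succ t ih =>
      rw [pow_succ, ih]
      conv_lhs => rw [hA.spectral_theorem, Unitary.conjStarAlgAut_apply, ← hU, ← hD]
      simp only [mul_assoc, hcancel, pow_succ]
  rw [key, Matrix.trace_mul_cycle, hU2, one_mul, hD, Matrix.diagonal_pow,
    Matrix.trace_diagonal]
  simp

lemma gramIter_eq_pow (G : Matrix m n ℂ) [DecidableEq n] (N : ℕ) :
    gramIter G N = (Gᴴ * G) ^ (2 ^ N) := by
  induction N with
  | zero => simp [gramIter]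
  | succ t ih =>
    show (gramIter G t)ᴴ * gramIter G t = _
    rw [ih, Matrix.conjTranspose_pow, (Matrix.isHermitian_conjTranspose_mul_self G).eq,
      ← pow_add]
    congr 1
    ring

lemma frobNorm_gramIter_sq (G : Matrix m n ℂ) [DecidableEq n] (N : ℕ) :
    frobNorm (gramIter G N) ^ 2 = ∑ i, singVals G i ^ (2 ^ (N + 2) : ℕ) := by
  have hH : (Gᴴ * G).IsHermitian := Matrix.isHermitian_conjTranspose_mul_self G
  have hherm : ((Gᴴ * G) ^ (2 ^ N)).IsHermitian := hH.pow _
  rw [frobNorm_sq_eq_re_trace, gramIter_eq_pow, hherm.eq, ← pow_add]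
  have h2 : (2 : ℕ) ^ N + 2 ^ N = 2 ^ (N + 1) := by ring
  rw [h2, trace_pow_eq hH]
  rw [show ((∑ i, ((hH.eigenvalues i : ℂ)) ^ 2 ^ (N + 1)).re)
      = ∑ i, (hH.eigenvalues i) ^ 2 ^ (N + 1) by
    rw [Complex.re_sum]
    refine Finset.sum_congr rfl fun i _ => ?_
    rw [← Complex.ofReal_pow, Complex.ofReal_re]]
  refine Finset.sum_congr rfl fun i _ => ?_
  have hnn : 0 ≤ hH.eigenvalues i :=
    (Matrix.posSemidef_conjTranspose_mul_self G).eigenvalues_nonneg i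
  rw [show (2 : ℕ) ^ (N + 2) = 2 ^ (N + 1) * 2 by ring, pow_mul', singVals,
    Real.sq_sqrt hnn]

lemma gram_eq_schatten (G : Matrix m n ℂ) [DecidableEq n] (N : ℕ) :
    frobNorm (gramIter G N) ^ ((2 : ℝ) ^ (-(N + 1 : ℤ))) = schattenNorm ((2 : ℝ) ^ (N + 2)) G := by
  unfold schattenNorm
  have hρ : ((2 : ℝ) ^ (N + 2)) = ((2 ^ (N + 2) : ℕ) : ℝ) := by push_cast; ring
  have hs : ∑ i, singVals G i ^ ((2 : ℝ) ^ (N + 2)) = ∑ i, singVals G i ^ (2 ^ (N + 2) : ℕ) := by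
    refine Finset.sum_congr rfl fun i _ => ?_
    rw [hρ, Real.rpow_natCast]
  rw [hs, ← frobNorm_gramIter_sq]
  rw [← Real.rpow_natCast (frobNorm (gramIter G N)) 2,
    ← Real.rpow_mul (frobNorm_nonneg _)]
  congr 1
  have h1 : ((2 : ℝ) ^ (N + 1) : ℝ) ≠ 0 := by positivity
  rw [show (-(N + 1 : ℤ)) = -((N + 1 : ℕ) : ℤ) by push_cast; ring, _root_.zpow_neg,
    zpow_natCast, show ((2 : ℝ)) ^ (N + 2) = (2 : ℝ) ^ (N + 1) * 2 by ring]
  push_cast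
  field_simp

lemma rescIter_eq {p q : ℕ} (G : Matrix (Fin p) (Fin q) ℂ) (N : ℕ) :
    rescIter G N = Real.exp (-(rescLog G N)) • gramIter G N := by
  induction N with
  | zero =>
    show ((frobNorm G)⁻¹ • G)ᴴ * ((frobNorm G)⁻¹ • G) = _
    by_cases h : frobNorm G = 0
    · have hG : G = 0 := (frobNorm_eq_zero_iff G).mp h
      subst hG
      simp [gramIter]
    · have hf : 0 < frobNorm G := lt_of_le_of_ne (frobNorm_nonneg G) (Ne.symm h)
      rw [Matrix.conjTranspose_smul, star_trivial, Matrix.smul_mul, Matrix.mul_smul, smul_smul]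
      show _ = Real.exp (-(2 * Real.log (frobNorm G))) • (Gᴴ * G)
      congr 1
      rw [show -(2 * Real.log (frobNorm G)) = -(Real.log ((frobNorm G) ^ 2)) by
        rw [Real.log_pow]; push_cast; ring, Real.exp_neg, Real.exp_log (by positivity), sq,
        mul_inv]
  | succ t ih =>
    show ((frobNorm (rescIter G t))⁻¹ • rescIter G t)ᴴ *
        ((frobNorm (rescIter G t))⁻¹ • rescIter G t) = _
    by_cases hm : frobNorm (gramIter G t) = 0
    · have hM : gramIter G t = 0 := (frobNorm_eq_zero_iff _).mp hm
      have hR : rescIter G t = 0 := by rw [ih, hM, smul_zero]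
      show _ = _ • ((gramIter G t)ᴴ * gramIter G t)
      rw [hR, hM]
      simp
    · have hfm : 0 < frobNorm (gramIter G t) :=
        lt_of_le_of_ne (frobNorm_nonneg _) (Ne.symm hm)
      set c : ℝ := Real.exp (-(rescLog G t)) with hc
      have hcpos : 0 < c := Real.exp_pos _
      have hfr : frobNorm (rescIter G t) = c * frobNorm (gramIter G t) := by
        rw [ih, frobNorm_smul _ hcpos.le]
      rw [ih, Matrix.conjTranspose_smul, star_trivial, Matrix.conjTranspose_smul, star_trivial,
        smul_mul_assoc, smul_mul_assoc, mul_smul_comm, mul_smul_comm, smul_smul, smul_smul,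
        smul_smul]
      show _ = Real.exp (-(2 * (rescLog G t + Real.log (frobNorm (rescIter G t))))) •
        ((gramIter G t)ᴴ * gramIter G t)
      rw [hfr]
      congr 1
      set fm : ℝ := frobNorm (gramIter G t)
      have hkey : Real.exp (-(2 * (rescLog G t + Real.log (c * fm))))
          = c ^ 2 * (((c * fm) ^ 2)⁻¹) := by
        rw [show -(2 * (rescLog G t + Real.log (c * fm)))
            = (-(rescLog G t)) + (-(rescLog G t)) + (-(Real.log ((c * fm) ^ 2))) by
          rw [Real.log_pow]; push_cast; ring]
        rw [Real.exp_add, Real.exp_add, Real.exp_neg, Real.exp_neg,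
          Real.exp_log (pow_pos (mul_pos hcpos hfm) 2), hc, Real.exp_neg]
        ring
      rw [hkey, frobNorm_smul _ hcpos.le]
      have hc0 : c ≠ 0 := hcpos.ne'
      have hm0 : fm ≠ 0 := hm
      rw [show frobNorm (gramIter G t) = fm from rfl]
      field_simp
  
end AuxLemmas

/-- After `N` iterations of the rescaled Gram iteration, unscaling exactly recovers the
Schatten norm: `‖H⁽ᴺ⁾‖_F^(2^(1-N)) · exp(2^(1-N) r⁽ᴺ⁾) = s_{2^N}(G)` (stated here for
paper index `N + 2`, i.e. after at least one iteration). -/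
theorem rescaled_gram_iteration_eq_schattenNorm {p q : ℕ} (G : Matrix (Fin p) (Fin q) ℂ) :
    ∀ N : ℕ,
      frobNorm (rescIter G N) ^ ((2 : ℝ) ^ (-(N + 1 : ℤ))) *
        Real.exp ((2 : ℝ) ^ (-(N + 1 : ℤ)) * rescLog G N) =
      schattenNorm ((2 : ℝ) ^ (N + 2)) G := by
  intro N
  have hf : frobNorm (rescIter G N) = Real.exp (-(rescLog G N)) * frobNorm (gramIter G N) := by
    rw [rescIter_eq, frobNorm_smul _ (Real.exp_nonneg _)]
  set e : ℝ := (2 : ℝ) ^ (-(N + 1 : ℤ)) with he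
  rw [hf, Real.mul_rpow (Real.exp_nonneg _) (frobNorm_nonneg _),
    Real.rpow_def_of_pos (Real.exp_pos _), Real.log_exp]
  rw [show Real.exp (-(rescLog G N) * e) * frobNorm (gramIter G N) ^ e * Real.exp (e * rescLog G N)
      = frobNorm (gramIter G N) ^ e *
        Real.exp (-(rescLog G N) * e + e * rescLog G N) by
    rw [Real.exp_add]; ring]
  rw [show -(rescLog G N) * e + e * rescLog G N = 0 by ring, Real.exp_zero, mul_one]
  exact gram_eq_schatten G N
end
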